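/- Let F and Q be n_x×n_x real matrices, let μ ∈ ℝ^{n_x} and z ∈ ℝ^{n_z} be fixed vectors, and let P₀ be an n_x×n_x real matrix. Set P₀⁻ := F·P₀·Fᵀ + Q and suppose S₀ := H·P₀⁻·Hᵀ + R is invertible; set K₀ := P₀⁻·Hᵀ·S₀⁻¹. Then the map P ↦ μ + K(F·P·Fᵀ + Q) ·ᵥ (z − H ·ᵥ μ), from n_x×n_x real matrices to ℝ^{n_x}, is Fréchet differentiable at P₀, and its derivative is the linear map Δ ↦ ((I − K₀·H) · F · Δ · Fᵀ · Hᵀ · S₀⁻¹) ·ᵥ (z − H ·ᵥ μ). -/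

import Mathlib

/-!
Inversion is differentiable at an invertible `S` with derivative `Δ ↦ -S⁻¹ Δ S⁻¹`, so by the
product rule the Kalman gain `K(P) = P Hᵀ S(P)⁻¹` has derivative
`Δ ↦ Δ Hᵀ S⁻¹ - P Hᵀ S⁻¹ H Δ Hᵀ S⁻¹ = (I - K H) Δ Hᵀ S⁻¹`.
The theorem follows by the chain rule through the affine prediction step `P ↦ F P Fᵀ + Q`
and the linear map `M ↦ M ·ᵥ (z - H ·ᵥ μ)`.
-/

open Matrix

attribute [local instance] Matrix.normedAddCommGroup Matrix.normedSpace

section Calculus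

variable {𝕜 : Type*} [NontriviallyNormedField 𝕜] [CompleteSpace 𝕜]
  {l m n : Type*} [Fintype l] [Fintype m] [Fintype n]

/- `hasFDerivAt_ringInverse` needs a normed algebra structure, which the entrywise sup norm is
not; we borrow the `L∞`-operator norm. Fréchet derivatives only see the topology, and the two
norms induce the same one, so the result transfers verbatim. -/
theorem Matrix.hasFDerivAt_inv [DecidableEq n] (A : Matrix n n 𝕜) (hA : IsUnit A) :
    HasFDerivAt (fun M : Matrix n n 𝕜 => M⁻¹)
      (-(LinearMap.mulLeftRight 𝕜 (A⁻¹, A⁻¹)).toContinuousLinearMap) A := by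
  let ring : NormedRing (Matrix n n 𝕜) := Matrix.linftyOpNormedRing
  let _ : NormedAlgebra 𝕜 (Matrix n n 𝕜) := Matrix.linftyOpNormedAlgebra
  have _ : @CompleteSpace (Matrix n n 𝕜) ring.toUniformSpace := FiniteDimensional.complete 𝕜 _
  have h := hasFDerivAt_ringInverse (𝕜 := 𝕜) hA.unit
  rw [IsUnit.unit_spec] at h
  rw [show (fun M : Matrix n n 𝕜 => M⁻¹) = Ring.inverse from funext nonsing_inv_eq_ringInverse]
  exact h.congr_fderiv (by ext Δ : 1; simp [nonsing_inv_eq_ringInverse]; rfl)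

theorem HasFDerivAt.matrix_mul {E : Type*} [NormedAddCommGroup E] [NormedSpace 𝕜 E]
    {f : E → Matrix l m 𝕜} {g : E → Matrix m n 𝕜}
    {f' : E →L[𝕜] Matrix l m 𝕜} {g' : E →L[𝕜] Matrix m n 𝕜} {x : E}
    (hf : HasFDerivAt f f' x) (hg : HasFDerivAt g g' x) :
    HasFDerivAt (fun y => f y * g y)
      ((mulRightLinearMap l 𝕜 (g x)).toContinuousLinearMap.comp f' +
        (mulLeftLinearMap n 𝕜 (f x)).toContinuousLinearMap.comp g') x :=
  ((mulLinearMap (l := l) (m := m) (n := n) (A := 𝕜) 𝕜).toContinuousBilinearMap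
    |>.hasFDerivAt_of_bilinear hf hg).congr_fderiv (by ext Δ : 1; exact add_comm _ _)

end Calculus

section KalmanGain

variable {𝕜 : Type*} [NontriviallyNormedField 𝕜] [CompleteSpace 𝕜]
  {m n : Type*} [Fintype m] [Fintype n] [DecidableEq m] [DecidableEq n]

noncomputable def kalmanGain (H : Matrix m n 𝕜) (R : Matrix m m 𝕜) (P : Matrix n n 𝕜) :
    Matrix n m 𝕜 :=
  P * Hᵀ * (H * P * Hᵀ + R)⁻¹

theorem hasFDerivAt_kalmanGain (H : Matrix m n 𝕜) (R : Matrix m m 𝕜) (P : Matrix n n 𝕜)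
    (hS : IsUnit (H * P * Hᵀ + R)) :
    ∃ L : Matrix n n 𝕜 →L[𝕜] Matrix n m 𝕜, HasFDerivAt (kalmanGain H R) L P ∧
      ∀ Δ, L Δ = (1 - kalmanGain H R P * H) * Δ * Hᵀ * (H * P * Hᵀ + R)⁻¹ := by
  have hPHt : HasFDerivAt (fun P : Matrix n n 𝕜 => P * Hᵀ)
      (mulRightLinearMap n 𝕜 Hᵀ).toContinuousLinearMap P :=
    (mulRightLinearMap n 𝕜 Hᵀ).toContinuousLinearMap.hasFDerivAt
  have hInnov : HasFDerivAt (fun P : Matrix n n 𝕜 => H * P * Hᵀ + R)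
      ((mulRightLinearMap m 𝕜 Hᵀ).comp (mulLeftLinearMap n 𝕜 H)).toContinuousLinearMap P :=
    ((mulRightLinearMap m 𝕜 Hᵀ).comp (mulLeftLinearMap n 𝕜 H)).toContinuousLinearMap.hasFDerivAt
      |>.add_const R
  refine ⟨_, hPHt.matrix_mul ((Matrix.hasFDerivAt_inv _ hS).comp P hInnov), fun Δ => ?_⟩
  rw [kalmanGain]
  set S := H * P * Hᵀ + R
  change Δ * Hᵀ * S⁻¹ + P * Hᵀ * -(S⁻¹ * (H * Δ * Hᵀ) * S⁻¹) = _
  simp only [Matrix.sub_mul, Matrix.one_mul, Matrix.mul_neg, Matrix.mul_assoc]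
  abel

end KalmanGain

theorem stmt_5_general (n_x n_z : ℕ)
    (H : Matrix (Fin n_z) (Fin n_x) ℝ) (R : Matrix (Fin n_z) (Fin n_z) ℝ)
    (F Q : Matrix (Fin n_x) (Fin n_x) ℝ)
    (μ : Fin n_x → ℝ) (z : Fin n_z → ℝ)
    (P₀ : Matrix (Fin n_x) (Fin n_x) ℝ)
    (P₀m : Matrix (Fin n_x) (Fin n_x) ℝ) (hP₀m : P₀m = F * P₀ * Fᵀ + Q)
    (S₀ : Matrix (Fin n_z) (Fin n_z) ℝ) (hS₀ : S₀ = H * P₀m * Hᵀ + R)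
    (hS : IsUnit S₀)
    (K₀ : Matrix (Fin n_x) (Fin n_z) ℝ) (hK₀ : K₀ = P₀m * Hᵀ * S₀⁻¹) :
    ∃ L : Matrix (Fin n_x) (Fin n_x) ℝ →L[ℝ] (Fin n_x → ℝ),
      HasFDerivAt
        (fun P : Matrix (Fin n_x) (Fin n_x) ℝ =>
          μ + ((F * P * Fᵀ + Q) * Hᵀ *
            (H * (F * P * Fᵀ + Q) * Hᵀ + R)⁻¹).mulVec (z - H.mulVec μ)) L P₀ ∧
      ∀ Δ : Matrix (Fin n_x) (Fin n_x) ℝ,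
        L Δ = ((1 - K₀ * H) * F * Δ * Fᵀ * Hᵀ * S₀⁻¹).mulVec (z - H.mulVec μ) := by
  subst hK₀ hS₀ hP₀m
  obtain ⟨L, hL, hLΔ⟩ := hasFDerivAt_kalmanGain H R _ hS
  have hPrior : HasFDerivAt (fun P => F * P * Fᵀ + Q)
      (LinearMap.mulLeftRight ℝ (F, Fᵀ)).toContinuousLinearMap P₀ :=
    (LinearMap.mulLeftRight ℝ (F, Fᵀ)).toContinuousLinearMap.hasFDerivAt.add_const Q
  have hApply := ((mulVecBilin ℝ ℝ).flip (z - H *ᵥ μ)).toContinuousLinearMap.hasFDerivAt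
    (x := kalmanGain H R (F * P₀ * Fᵀ + Q))
  have hUpdate := (hApply.comp P₀ (hL.comp P₀ hPrior)).const_add μ
  refine ⟨_, hUpdate, fun Δ => ?_⟩
  change L (F * Δ * Fᵀ) *ᵥ (z - H *ᵥ μ) = _
  simp only [hLΔ, kalmanGain, Matrix.mul_assoc]

/-- With fixed `μ`, `z`, `P₀⁻ = F·P₀·Fᵀ + Q`, `S₀ = H·P₀⁻·Hᵀ + R`
invertible and `K₀ = P₀⁻·Hᵀ·S₀⁻¹`, the map `P ↦ μ + K(F·P·Fᵀ + Q) ·ᵥ (z − H ·ᵥ μ)`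
is Fréchet differentiable at `P₀` with derivative
`Δ ↦ ((I − K₀·H)·F·Δ·Fᵀ·Hᵀ·S₀⁻¹) ·ᵥ (z − H ·ᵥ μ)`. -/
theorem stmt_5 (n_x n_z : ℕ) (hnx : 0 < n_x) (hnz : 0 < n_z)
    (H : Matrix (Fin n_z) (Fin n_x) ℝ) (R : Matrix (Fin n_z) (Fin n_z) ℝ)
    (F Q : Matrix (Fin n_x) (Fin n_x) ℝ)
    (μ : Fin n_x → ℝ) (z : Fin n_z → ℝ)
    (P₀ : Matrix (Fin n_x) (Fin n_x) ℝ)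
    (P₀m : Matrix (Fin n_x) (Fin n_x) ℝ) (hP₀m : P₀m = F * P₀ * Fᵀ + Q)
    (S₀ : Matrix (Fin n_z) (Fin n_z) ℝ) (hS₀ : S₀ = H * P₀m * Hᵀ + R)
    (hS : IsUnit S₀)
    (K₀ : Matrix (Fin n_x) (Fin n_z) ℝ) (hK₀ : K₀ = P₀m * Hᵀ * S₀⁻¹) :
    ∃ L : Matrix (Fin n_x) (Fin n_x) ℝ →L[ℝ] (Fin n_x → ℝ),
      HasFDerivAt
        (fun P : Matrix (Fin n_x) (Fin n_x) ℝ =>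
          μ + ((F * P * Fᵀ + Q) * Hᵀ *
            (H * (F * P * Fᵀ + Q) * Hᵀ + R)⁻¹).mulVec (z - H.mulVec μ)) L P₀ ∧
      ∀ Δ : Matrix (Fin n_x) (Fin n_x) ℝ,
        L Δ = ((1 - K₀ * H) * F * Δ * Fᵀ * Hᵀ * S₀⁻¹).mulVec (z - H.mulVec μ) :=
  stmt_5_general n_x n_z H R F Q μ z P₀ P₀m hP₀m S₀ hS₀ hS K₀ hK₀
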